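/- Let $X$ be a $p \times n$ real matrix with $X = A Z$ for a deterministic $p \times p$ matrix $A$ and a $p \times n$ random matrix $Z$ with independent entries, each with mean $0$ and variance $1$. Let $\Sigma = A A^{T}$. Let $k \ge 1$ and let $\sigma_1, \ldots, \sigma_k \in \{1,\ldots,n\}$ be pairwise distinct indices. Then $\mathbb{E}\big[\prod_{i=1}^k (X^{T}X)_{\sigma_i, \sigma_{i+1}}\big] = \mathrm{tr}(\Sigma^k)$, where $\sigma_{k+1} := \sigma_1$. -/

import Mathlib

open MeasureTheory ProbabilityTheory Matrix Finset

/-!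
Write `B = Aᵀ A`, so that `(XᵀX)_{st} = ∑_{b,c} Z_{bs} B_{bc} Z_{ct}`. Expanding the cyclic product
gives a sum over index tuples `b, c` of `∏_i B_{b_i c_i}` times `∏_i Z_{b_i σ_i} Z_{c_{i-1} σ_i}`.
Since `σ` is injective, the `i`-th factor of the latter is the only one involving column `σ_i`, and
the columns of `Z` are independent, so its expectation is `∏_i E[Z_{b_i σ_i} Z_{c_{i-1} σ_i}]`,
i.e. `1` if `b_i = c_{i-1}` for all `i` and `0` otherwise. What survives is the sum over closed walks
`∏_i B_{c_{i-1} c_i}`, which is `tr(B^k) = tr((AAᵀ)^k)`.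
-/

namespace Matrix

variable {ι R : Type*} [Fintype ι] [CommSemiring R]

theorem prod_transpose_mul_mul_apply_cyclic {κ : Type*} {k : ℕ} [NeZero k]
    (N : Matrix ι κ R) (B : Matrix ι ι R) (σ : Fin k → κ) :
    ∏ i, (Nᵀ * B * N) (σ i) (σ (i + 1)) =
      ∑ b : Fin k → ι, ∑ c : Fin k → ι,
        (∏ i, B (b i) (c i)) * ∏ i, N (b i) (σ i) * N (c (i - 1)) (σ i) := by
  have entry (s t : κ) : (Nᵀ * B * N) s t = ∑ b, ∑ c, N b s * B b c * N c t := by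
    simp only [mul_apply, transpose_apply, sum_mul]
    exact sum_comm
  have shift (c : Fin k → ι) : ∏ i, N (c i) (σ (i + 1)) = ∏ i, N (c (i - 1)) (σ i) := by
    simpa using (Equiv.prod_comp (Equiv.subRight (1 : Fin k)) fun j => N (c j) (σ (j + 1))).symm
  simp_rw [entry, Fintype.prod_sum, prod_mul_distrib, shift]
  refine sum_congr rfl fun b _ => sum_congr rfl fun c _ => ?_
  ring

variable [DecidableEq ι]

theorem pow_succ_apply_eq_sum_prod (M : Matrix ι ι R) (m : ℕ) (i j : ι) :
    (M ^ (m + 1)) i j = ∑ x : Fin m → ι, ∏ t : Fin (m + 1),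
      M ((Fin.cons i x : Fin (m + 1) → ι) t) ((Fin.snoc x j : Fin (m + 1) → ι) t) := by
  induction m generalizing i with
  | zero => simp [Fin.snoc]
  | succ m ih =>
    rw [pow_succ', mul_apply, ← (Fin.consEquiv fun _ => ι).sum_comp, Fintype.sum_prod_type]
    refine sum_congr rfl fun a _ => ?_
    rw [ih, mul_sum]
    refine sum_congr rfl fun x _ => ?_
    simp only [Fin.consEquiv, Equiv.coe_fn_mk]
    rw [← Fin.cons_snoc_eq_snoc_cons, Fin.prod_univ_succ (n := m + 1)]
    simp only [Fin.cons_zero, Fin.cons_succ]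

theorem trace_pow_eq_sum_prod {k : ℕ} [NeZero k] (M : Matrix ι ι R) :
    trace (M ^ k) = ∑ y : Fin k → ι, ∏ t, M (y t) (y (t + 1)) := by
  obtain ⟨m, rfl⟩ := Nat.exists_eq_succ_of_ne_zero (NeZero.ne k)
  have snoc_eq_cons_add_one (i : ι) (x : Fin m → ι) (t : Fin (m + 1)) :
      (Fin.snoc x i : Fin (m + 1) → ι) t = (Fin.cons i x : Fin (m + 1) → ι) (t + 1) := by
    induction t using Fin.lastCases with
    | last => simp
    | cast s => simp
  simp_rw [trace, diag_apply, pow_succ_apply_eq_sum_prod, snoc_eq_cons_add_one,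
    ← (Fin.consEquiv fun _ => ι).sum_comp, Fintype.sum_prod_type]
  rfl

theorem trace_mul_pow_comm (A B : Matrix ι ι R) (k : ℕ) :
    trace ((A * B) ^ k) = trace ((B * A) ^ k) := by
  cases k with
  | zero => simp
  | succ k =>
    rw [pow_succ, ← Matrix.mul_assoc, trace_mul_comm, mul_pow_mul, ← Matrix.mul_assoc, ← pow_succ']

theorem sum_sum_prod_mul_prod_ite_eq_trace_pow {k : ℕ} [NeZero k] (B : Matrix ι ι R) :
    ∑ b : Fin k → ι, ∑ c : Fin k → ι,
      (∏ i, B (b i) (c i)) * ∏ i, (if b i = c (i - 1) then 1 else 0) = trace (B ^ k) := by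
  have delta (b c : Fin k → ι) :
      ∏ i, (if b i = c (i - 1) then (1 : R) else 0) = if b = fun i => c (i - 1) then 1 else 0 := by
    simp only [Fintype.prod_boole, funext_iff]
    congr
  simp_rw [delta, mul_ite, mul_one, mul_zero]
  rw [sum_comm, trace_pow_eq_sum_prod]
  simp_rw [sum_ite_eq', mem_univ, if_true]
  refine sum_congr rfl fun c _ => ?_
  simpa using (Equiv.prod_comp (Equiv.addRight (1 : Fin k)) fun i => B (c (i - 1)) (c i)).symm

end Matrix

theorem ProbabilityTheory.iIndepFun.curry {Ω ι κ 𝓧 : Type*} {mΩ : MeasurableSpace Ω}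
    {μ : Measure Ω} [MeasurableSpace 𝓧] {X : ι → κ → Ω → 𝓧} (mX : ∀ i j, Measurable (X i j))
    (h : iIndepFun (fun p : ι × κ => X p.1 p.2) μ) :
    iIndepFun (fun i ω j => X i j ω) μ := by
  have := h.isProbabilityMeasure
  have (i : ι) (j : κ) : IsProbabilityMeasure (μ.map (X i j)) :=
    Measure.isProbabilityMeasure_map (mX i j).aemeasurable
  have hlaw : μ.map (fun ω i j => X i j ω) =
      Measure.infinitePi fun i => Measure.infinitePi fun j => μ.map (X i j) := by
    rw [← Measure.infinitePi_map_curry,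
      ← (iIndepFun_iff_map_fun_eq_infinitePi_map fun p : ι × κ => mX p.1 p.2).1 h,
      Measure.map_map (by fun_prop) (by fun_prop)]
    rfl
  rw [iIndepFun_iff_map_fun_eq_infinitePi_map (fun i => by fun_prop), hlaw]
  congr 1 with i : 1
  rw [← Measure.infinitePi_map_eval (fun i => Measure.infinitePi fun j => μ.map (X i j)) i, ← hlaw,
    Measure.map_map (by fun_prop) (by fun_prop)]
  rfl

theorem ProbabilityTheory.iIndepFun.integrable_prod {Ω ι : Type*} {mΩ : MeasurableSpace Ω}
    {μ : Measure Ω} {X : ι → Ω → ℝ} (hX : iIndepFun X μ) (mX : ∀ i, Measurable (X i))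
    (hint : ∀ i, Integrable (X i) μ) (s : Finset ι) :
    Integrable (∏ i ∈ s, X i) μ := by
  classical
  have := hX.isProbabilityMeasure
  induction s using Finset.induction_on with
  | empty => exact prod_empty (f := X) ▸ integrable_const 1
  | insert j s hj ih =>
    rw [prod_insert hj]
    exact (hX.indepFun_finsetProd_of_notMem mX hj).symm.integrable_mul (hint j) ih

section StandardizedEntries

variable {Ω ι κ ν : Type*} {mΩ : MeasurableSpace Ω} {μ : Measure Ω} {Z : ι → κ → Ω → ℝ}

theorem integral_entry_mul_entry [DecidableEq ι] (hmeas : ∀ i t, Measurable (Z i t))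
    (hindep : iIndepFun (fun p : ι × κ => Z p.1 p.2) μ) (hmean : ∀ i t, ∫ ω, Z i t ω ∂μ = 0)
    (hvar : ∀ i t, ∫ ω, Z i t ω ^ 2 ∂μ = 1) (a b : ι) (t : κ) :
    ∫ ω, Z a t ω * Z b t ω ∂μ = if a = b then 1 else 0 := by
  split_ifs with hab
  · subst hab
    simpa [sq] using hvar a t
  · have hne : (a, t) ≠ (b, t) := by simpa
    rw [(hindep.indepFun hne).integral_fun_mul_eq_mul_integral (hmeas a t).aestronglyMeasurable
      (hmeas b t).aestronglyMeasurable, hmean, zero_mul]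

theorem iIndepFun_entry_mul_entry (hmeas : ∀ i t, Measurable (Z i t))
    (hindep : iIndepFun (fun p : ι × κ => Z p.1 p.2) μ) {σ : ν → κ} (hσ : σ.Injective)
    (a b : ν → ι) :
    iIndepFun (fun j ω => Z (a j) (σ j) ω * Z (b j) (σ j) ω) μ := by
  have hcolumns : iIndepFun (fun t ω i => Z i t ω) μ :=
    iIndepFun.curry (X := fun t i => Z i t) (fun t i => hmeas i t)
      (hindep.precomp Prod.swap_injective)
  exact (hcolumns.precomp hσ).comp (fun j z => z (a j) * z (b j)) fun j => by fun_prop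

theorem integrable_prod_entry_mul_entry [Fintype ν] (hmeas : ∀ i t, Measurable (Z i t))
    (hindep : iIndepFun (fun p : ι × κ => Z p.1 p.2) μ) (hvar : ∀ i t, ∫ ω, Z i t ω ^ 2 ∂μ = 1)
    {σ : ν → κ} (hσ : σ.Injective) (a b : ν → ι) :
    Integrable (fun ω => ∏ j, Z (a j) (σ j) ω * Z (b j) (σ j) ω) μ := by
  -- a non-integrable function has integral `0`, so `hvar` forces square-integrability
  have hL2 (i : ι) (t : κ) : MemLp (Z i t) 2 μ :=
    (memLp_two_iff_integrable_sq (hmeas i t).aestronglyMeasurable).2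
      (.of_integral_ne_zero (by simp [hvar]))
  simpa only [Finset.prod_fn] using (iIndepFun_entry_mul_entry hmeas hindep hσ a b).integrable_prod
    (fun j => by fun_prop) (fun j => (hL2 _ _).integrable_mul (hL2 _ _)) univ

theorem integral_prod_entry_mul_entry [Fintype ν] [DecidableEq ι]
    (hmeas : ∀ i t, Measurable (Z i t)) (hindep : iIndepFun (fun p : ι × κ => Z p.1 p.2) μ)
    (hmean : ∀ i t, ∫ ω, Z i t ω ∂μ = 0) (hvar : ∀ i t, ∫ ω, Z i t ω ^ 2 ∂μ = 1)
    {σ : ν → κ} (hσ : σ.Injective) (a b : ν → ι) :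
    ∫ ω, ∏ j, Z (a j) (σ j) ω * Z (b j) (σ j) ω ∂μ = ∏ j, if a j = b j then 1 else 0 := by
  rw [(iIndepFun_entry_mul_entry hmeas hindep hσ a b).integral_fun_prod_eq_prod_integral
    fun j => by fun_prop]
  simp_rw [integral_entry_mul_entry hmeas hindep hmean hvar]

end StandardizedEntries

theorem cyclic_product_unbiased_general {Ω : Type*} [MeasureSpace Ω]
    (p n : ℕ) (A : Matrix (Fin p) (Fin p) ℝ)
    (Z : Fin p → Fin n → Ω → ℝ)
    (hmeas : ∀ i t, Measurable (Z i t))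
    (hindep : iIndepFun
      (fun (it : Fin p × Fin n) ω => Z it.1 it.2 ω) volume)
    (hmean : ∀ i t, ∫ ω, Z i t ω = 0)
    (hvar : ∀ i t, ∫ ω, (Z i t ω) ^ 2 = 1)
    (X : Ω → Matrix (Fin p) (Fin n) ℝ)
    (hX : ∀ ω, X ω = A * Matrix.of (fun i t => Z i t ω))
    (k : ℕ) [NeZero k] (σ : Fin k → Fin n) (hσ : Function.Injective σ) :
    ∫ ω, ∏ i : Fin k, ((X ω)ᵀ * X ω) (σ i) (σ (i + 1))
      = Matrix.trace ((A * Aᵀ) ^ k) := by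
  have hexpand (ω : Ω) : ∏ i, ((X ω)ᵀ * X ω) (σ i) (σ (i + 1)) =
      ∑ b : Fin k → Fin p, ∑ c : Fin k → Fin p, (∏ i, (Aᵀ * A) (b i) (c i)) *
        ∏ i, Z (b i) (σ i) ω * Z (c (i - 1)) (σ i) ω := by
    rw [hX, transpose_mul]
    simpa only [Matrix.mul_assoc, of_apply] using
      prod_transpose_mul_mul_apply_cyclic (of fun i t => Z i t ω) (Aᵀ * A) σ
  have hint (b c : Fin k → Fin p) :=
    integrable_prod_entry_mul_entry hmeas hindep hvar hσ b fun i => c (i - 1)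
  simp_rw [hexpand]
  rw [integral_finsetSum _ fun b _ => integrable_finsetSum _ fun c _ => (hint b c).const_mul _]
  simp_rw [integral_finsetSum _ fun c _ => (hint _ c).const_mul _, integral_const_mul,
    integral_prod_entry_mul_entry hmeas hindep hmean hvar hσ]
  rw [sum_sum_prod_mul_prod_ite_eq_trace_pow, trace_mul_pow_comm]

theorem cyclic_product_unbiased {Ω : Type*} [MeasureSpace Ω]
    [IsProbabilityMeasure (volume : Measure Ω)]
    (p n : ℕ) (A : Matrix (Fin p) (Fin p) ℝ)
    (Z : Fin p → Fin n → Ω → ℝ)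
    (hmeas : ∀ i t, Measurable (Z i t))
    (hindep : iIndepFun
      (fun (it : Fin p × Fin n) ω => Z it.1 it.2 ω) volume)
    (hmean : ∀ i t, ∫ ω, Z i t ω = 0)
    (hvar : ∀ i t, ∫ ω, (Z i t ω) ^ 2 = 1)
    (X : Ω → Matrix (Fin p) (Fin n) ℝ)
    (hX : ∀ ω, X ω = A * Matrix.of (fun i t => Z i t ω))
    (k : ℕ) [NeZero k] (σ : Fin k → Fin n) (hσ : Function.Injective σ)
    (hint : Integrable (fun ω => ∏ i : Fin k, ((X ω)ᵀ * X ω) (σ i) (σ (i + 1)))) :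
    ∫ ω, ∏ i : Fin k, ((X ω)ᵀ * X ω) (σ i) (σ (i + 1))
      = Matrix.trace ((A * Aᵀ) ^ k) :=
  cyclic_product_unbiased_general p n A Z hmeas hindep hmean hvar X hX k σ hσ
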